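/- arXiv:2005.07167 — 3 statements merged into one kernel-verified Lean document; each statement's English description precedes it below -/
import Mathlib

section
/- There exists a constant C such that for all t ≥ 1 with M maximal blocks of 1s in its binary expansion, κ₂(t) ≤ C·M, where κ₂ satisfies κ₂(0)=0, κ₂(2t)=κ₂(t), κ₂(2t+1)=(κ₂(t)+κ₂(t+1))/2+1. -/
/-!
The constant is `C = 4`, via the sharper invariant `κ₂(t) ≤ Φ(t) := 4M(t) - 4 / 2^ℓ(t)`
(`potential`) for `t ≥ 1`, where `ℓ(t)` (`lowBlockLength`) is the length of the lowest block of
1s of `t`; it is an equality at `t = 2^k - 1`, where `κ₂` increases to 4. `Φ` is invariant under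
`t ↦ 2t`, and `Φ(2u+1)` equals `4M(u) + 2` or `(Φ(u) + 4M(u)) / 2` according to the parity of
`u`. Since `Φ(u+1) ≤ 4M(u) + 2`, and even `Φ(u+1) ≤ 4M(u) - 2` for odd `u` (the carry destroys
the lowest block of `u`), the recursion for `κ₂(2u+1)` preserves the invariant.
-/

/-- The number of maximal blocks of consecutive 1s in the binary expansion of `t`:
each such block is counted at its most significant bit. -/
def blockCount (t : ℕ) : ℕ :=
  ((Finset.range (t+1)).filter (fun i => t.testBit i = true ∧ t.testBit (i+1) = false)).card

open Finset

lemma blockCount_eq_card_filter_range {t m : ℕ} (h : t < m) :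
    blockCount t = #((range m).filter fun i => t.testBit i = true ∧ t.testBit (i+1) = false) := by
  refine congrArg card (Finset.ext fun i => ?_)
  simp only [mem_filter, mem_range]
  refine and_congr_left fun hi => ?_
  have : i < t := Nat.lt_two_pow_self.trans_le (Nat.ge_two_pow_of_testBit hi.1)
  omega

lemma blockCount_bit (b : Bool) (u : ℕ) :
    blockCount (Nat.bit b u) = blockCount u + if b = true ∧ u % 2 = 0 then 1 else 0 := by
  have hu : u < Nat.bit b u + 1 := by cases b <;> simp [Nat.bit_val] <;> omega
  rw [blockCount_eq_card_filter_range (m := Nat.bit b u + 2) (by omega), card_filter,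
    sum_range_succ', ← card_filter]
  simp only [Nat.testBit_bit_succ, zero_add]
  rw [← blockCount_eq_card_filter_range hu, Nat.testBit_bit_zero, Nat.testBit_zero]
  cases b <;> simp

lemma blockCount_two_mul (u : ℕ) : blockCount (2 * u) = blockCount u := by
  simpa using blockCount_bit false u

lemma blockCount_two_mul_add_one (u : ℕ) :
    blockCount (2 * u + 1) = blockCount u + if u % 2 = 0 then 1 else 0 := by
  simpa using blockCount_bit true u

def lowBlockLength (t : ℕ) : ℕ :=
  if t = 0 then 0
  else if t % 2 = 0 then lowBlockLength (t / 2)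
  else if t / 2 % 2 = 1 then lowBlockLength (t / 2) + 1 else 1
decreasing_by all_goals omega

lemma lowBlockLength_two_mul {u : ℕ} (hu : u ≠ 0) : lowBlockLength (2 * u) = lowBlockLength u := by
  rw [lowBlockLength]
  simp [hu]

lemma lowBlockLength_two_mul_add_one (u : ℕ) :
    lowBlockLength (2 * u + 1) = if u % 2 = 1 then lowBlockLength u + 1 else 1 := by
  rw [lowBlockLength]
  simp [show (2 * u + 1) / 2 = u by omega]

def potential (t : ℕ) : ℚ := 4 * blockCount t - 4 / 2 ^ lowBlockLength t

lemma potential_lt (t : ℕ) : potential t < 4 * blockCount t := by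
  unfold potential
  have : (0 : ℚ) < 4 / 2 ^ lowBlockLength t := by positivity
  linarith

lemma potential_two_mul {u : ℕ} (hu : u ≠ 0) : potential (2 * u) = potential u := by
  rw [potential, potential, blockCount_two_mul, lowBlockLength_two_mul hu]

lemma potential_two_mul_add_one_of_even {u : ℕ} (hu : u % 2 = 0) :
    potential (2 * u + 1) = 4 * blockCount u + 2 := by
  rw [potential, blockCount_two_mul_add_one, lowBlockLength_two_mul_add_one]
  simp only [hu, ↓reduceIte, Nat.cast_add, Nat.cast_one, zero_ne_one, pow_one]
  ring

lemma potential_two_mul_add_one_of_odd {u : ℕ} (hu : u % 2 = 1) :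
    potential (2 * u + 1) = (potential u + 4 * blockCount u) / 2 := by
  rw [potential, potential, blockCount_two_mul_add_one, lowBlockLength_two_mul_add_one]
  simp only [hu, one_ne_zero, ↓reduceIte, add_zero, pow_succ]
  ring

lemma potential_succ_le_of_even {u : ℕ} (hu : u % 2 = 0) :
    potential (u + 1) ≤ 4 * blockCount u + 2 := by
  obtain ⟨v, rfl⟩ : ∃ v, u = 2 * v := ⟨u / 2, by omega⟩
  rw [blockCount_two_mul]
  rcases Nat.mod_two_eq_zero_or_one v with hv | hv
  · rw [potential_two_mul_add_one_of_even hv]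
  · rw [potential_two_mul_add_one_of_odd hv]
    linarith [potential_lt v]

lemma potential_succ_le_of_odd {u : ℕ} (hu : u % 2 = 1) :
    potential (u + 1) ≤ 4 * blockCount u - 2 := by
  induction u using Nat.strong_induction_on with
  | _ u ih =>
    obtain ⟨v, rfl⟩ : ∃ v, u = 2 * v + 1 := ⟨u / 2, by omega⟩
    rw [show 2 * v + 1 + 1 = 2 * (v + 1) by ring, potential_two_mul v.succ_ne_zero,
      blockCount_two_mul_add_one]
    rcases Nat.mod_two_eq_zero_or_one v with hv | hv
    · simp only [hv, ↓reduceIte, Nat.cast_add, Nat.cast_one]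
      linarith [potential_succ_le_of_even hv]
    · simp only [hv, one_ne_zero, ↓reduceIte, add_zero]
      exact ih v (by omega) hv

lemma le_potential {κ : ℕ → ℚ} (h0 : κ 0 = 0) (he : ∀ t, κ (2 * t) = κ t)
    (ho : ∀ t, κ (2 * t + 1) = (κ t + κ (t + 1)) / 2 + 1) {t : ℕ} (ht : 1 ≤ t) :
    κ t ≤ potential t := by
  induction t using Nat.strong_induction_on with
  | _ t ih =>
    obtain ⟨u, rfl | rfl⟩ := Nat.even_or_odd' t
    · rw [he, potential_two_mul (by omega)]
      exact ih u (by omega) (by omega)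
    rcases Nat.eq_zero_or_pos u with rfl | hu
    · have h1 := ho 0
      rw [potential_two_mul_add_one_of_even rfl]
      simp only [mul_zero, zero_add, h0] at h1 ⊢
      linarith
    have hκu := ih u (by omega) hu
    have hκu' := ih (u + 1) (by omega) (by omega)
    rw [ho]
    rcases Nat.mod_two_eq_zero_or_one u with hu2 | hu2
    · rw [potential_two_mul_add_one_of_even hu2]
      linarith [potential_lt u, potential_succ_le_of_even hu2]
    · rw [potential_two_mul_add_one_of_odd hu2]
      linarith [potential_succ_le_of_odd hu2]

theorem stmt_4 (κ2 : ℕ → ℚ) (h2z : κ2 0 = 0)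
    (h2e : ∀ t, κ2 (2*t) = κ2 t)
    (h2o : ∀ t, κ2 (2*t+1) = (κ2 t + κ2 (t+1))/2 + 1) :
    ∃ C : ℚ, ∀ t : ℕ, 1 ≤ t → κ2 t ≤ C * (blockCount t : ℚ) :=
  ⟨4, fun _ ht => (le_potential h2z h2e h2o ht).trans (potential_lt _).le⟩
end

section
/- With m(t)=min(D(t),D(t+1)) and D(t)=κ₂(t)−κ₃(t)/3, for all t ≥ 0, m(8t+1) ≥ m(t)+1. -/
/-!
With `D = κ₂ - κ₃/3` and `δ(t) = κ₂(t+1) - κ₂(t)` (`step`), unfolding the recursions three levels gives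
`D(8t+1) = 7/8 D(t) + 1/8 D(t+1) + 3/8 δ(t) + 11/4` and
`D(8t+2) = D(4t+1) = 3/4 D(t) + 1/4 D(t+1) + δ(t)/2 + 2`:
convex combinations of `D(t), D(t+1)` plus shifts that `|δ| ≤ 2` keeps at least `2` and `1`.
The bound on `δ` follows by induction from `δ(2t) = δ(t)/2 + 1` and `δ(2t+1) = δ(t)/2 - 1`.
-/

namespace Kappa

def D (κ2 κ3 : ℕ → ℚ) (t : ℕ) : ℚ := κ2 t - κ3 t / 3

def step (κ2 : ℕ → ℚ) (t : ℕ) : ℚ := κ2 (t + 1) - κ2 t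

variable {κ2 κ3 : ℕ → ℚ}

theorem step_two_mul (h2e : ∀ t, κ2 (2*t) = κ2 t)
    (h2o : ∀ t, κ2 (2*t+1) = (κ2 t + κ2 (t+1))/2 + 1) (t : ℕ) :
    step κ2 (2 * t) = step κ2 t / 2 + 1 := by
  simp only [step, h2o, h2e]
  ring

theorem step_two_mul_add_one (h2e : ∀ t, κ2 (2*t) = κ2 t)
    (h2o : ∀ t, κ2 (2*t+1) = (κ2 t + κ2 (t+1))/2 + 1) (t : ℕ) :
    step κ2 (2 * t + 1) = step κ2 t / 2 - 1 := by
  have h : 2 * t + 1 + 1 = 2 * (t + 1) := by ring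
  simp only [step, h, h2o, h2e]
  ring

theorem abs_step_le_two (h2e : ∀ t, κ2 (2*t) = κ2 t)
    (h2o : ∀ t, κ2 (2*t+1) = (κ2 t + κ2 (t+1))/2 + 1) (t : ℕ) :
    |step κ2 t| ≤ 2 := by
  induction t using Nat.strong_induction_on with
  | _ t ih =>
    obtain ⟨k, rfl | rfl⟩ := Nat.even_or_odd' t
    · rcases Nat.eq_zero_or_pos k with rfl | hk
      · -- `step 0` is the fixed point of `x ↦ x/2 + 1`
        have h0 := step_two_mul h2e h2o 0
        have : step κ2 0 = 2 := by linarith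
        simp [this]
      · have := abs_le.mp (ih k (by omega))
        rw [step_two_mul h2e h2o, abs_le]
        constructor <;> linarith
    · have := abs_le.mp (ih k (by omega))
      rw [step_two_mul_add_one h2e h2o, abs_le]
      constructor <;> linarith

theorem D_two_mul (h2e : ∀ t, κ2 (2*t) = κ2 t) (h3e : ∀ t, κ3 (2*t) = κ3 t) (t : ℕ) :
    D κ2 κ3 (2 * t) = D κ2 κ3 t := by
  simp only [D, h2e, h3e]

theorem D_two_mul_add_one (h2o : ∀ t, κ2 (2*t+1) = (κ2 t + κ2 (t+1))/2 + 1)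
    (h3o : ∀ t, κ3 (2*t+1) = (κ3 t + κ3 (t+1))/2 + (3/2)*(κ2 t - κ2 (t+1))) (t : ℕ) :
    D κ2 κ3 (2 * t + 1) = (D κ2 κ3 t + D κ2 κ3 (t + 1)) / 2 + step κ2 t / 2 + 1 := by
  simp only [D, step, h2o, h3o]
  ring

theorem D_four_mul_add_one (h2e : ∀ t, κ2 (2*t) = κ2 t)
    (h2o : ∀ t, κ2 (2*t+1) = (κ2 t + κ2 (t+1))/2 + 1) (h3e : ∀ t, κ3 (2*t) = κ3 t)
    (h3o : ∀ t, κ3 (2*t+1) = (κ3 t + κ3 (t+1))/2 + (3/2)*(κ2 t - κ2 (t+1))) (t : ℕ) :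
    D κ2 κ3 (4 * t + 1) = 3/4 * D κ2 κ3 t + 1/4 * D κ2 κ3 (t + 1) + step κ2 t / 2 + 2 := by
  have h : 4 * t + 1 = 2 * (2 * t) + 1 := by ring
  rw [h, D_two_mul_add_one h2o h3o, D_two_mul h2e h3e, D_two_mul_add_one h2o h3o,
    step_two_mul h2e h2o]
  ring

theorem D_eight_mul_add_one (h2e : ∀ t, κ2 (2*t) = κ2 t)
    (h2o : ∀ t, κ2 (2*t+1) = (κ2 t + κ2 (t+1))/2 + 1) (h3e : ∀ t, κ3 (2*t) = κ3 t)
    (h3o : ∀ t, κ3 (2*t+1) = (κ3 t + κ3 (t+1))/2 + (3/2)*(κ2 t - κ2 (t+1))) (t : ℕ) :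
    D κ2 κ3 (8 * t + 1) = 7/8 * D κ2 κ3 t + 1/8 * D κ2 κ3 (t + 1) + 3/8 * step κ2 t + 11/4 := by
  have h : 8 * t + 1 = 2 * (2 * (2 * t)) + 1 := by ring
  have h4 : 2 * (2 * t) + 1 = 4 * t + 1 := by ring
  rw [h, D_two_mul_add_one h2o h3o, D_two_mul h2e h3e, D_two_mul h2e h3e, h4,
    D_four_mul_add_one h2e h2o h3e h3o, step_two_mul h2e h2o, step_two_mul h2e h2o]
  ring

theorem D_eight_mul_add_two (h2e : ∀ t, κ2 (2*t) = κ2 t) (h3e : ∀ t, κ3 (2*t) = κ3 t)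
    (t : ℕ) : D κ2 κ3 (8 * t + 2) = D κ2 κ3 (4 * t + 1) := by
  rw [show 8 * t + 2 = 2 * (4 * t + 1) by ring, D_two_mul h2e h3e]

end Kappa

theorem stmt_16_general (κ2 : ℕ → ℚ)
    (h2e : ∀ t, κ2 (2*t) = κ2 t)
    (h2o : ∀ t, κ2 (2*t+1) = (κ2 t + κ2 (t+1))/2 + 1) (κ3 : ℕ → ℚ)
    (h3e : ∀ t, κ3 (2*t) = κ3 t)
    (h3o : ∀ t, κ3 (2*t+1) = (κ3 t + κ3 (t+1))/2 + (3/2)*(κ2 t - κ2 (t+1))) :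
    ∀ t : ℕ,
      min (κ2 t - κ3 t / 3) (κ2 (t+1) - κ3 (t+1) / 3) + 1
        ≤ min (κ2 (8*t+1) - κ3 (8*t+1) / 3) (κ2 (8*t+2) - κ3 (8*t+2) / 3) := by
  intro t
  change min (Kappa.D κ2 κ3 t) (Kappa.D κ2 κ3 (t+1)) + 1
    ≤ min (Kappa.D κ2 κ3 (8*t+1)) (Kappa.D κ2 κ3 (8*t+2))
  have hm₀ := min_le_left (Kappa.D κ2 κ3 t) (Kappa.D κ2 κ3 (t+1))
  have hm₁ := min_le_right (Kappa.D κ2 κ3 t) (Kappa.D κ2 κ3 (t+1))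
  have hstep := abs_le.mp (Kappa.abs_step_le_two h2e h2o t)
  rw [Kappa.D_eight_mul_add_one h2e h2o h3e h3o, Kappa.D_eight_mul_add_two h2e h3e,
    Kappa.D_four_mul_add_one h2e h2o h3e h3o]
  exact le_min (by linarith) (by linarith)

theorem stmt_16 (κ2 : ℕ → ℚ) (h2z : κ2 0 = 0)
    (h2e : ∀ t, κ2 (2*t) = κ2 t)
    (h2o : ∀ t, κ2 (2*t+1) = (κ2 t + κ2 (t+1))/2 + 1) (κ3 : ℕ → ℚ) (h3z : κ3 0 = 0)
    (h3e : ∀ t, κ3 (2*t) = κ3 t)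
    (h3o : ∀ t, κ3 (2*t+1) = (κ3 t + κ3 (t+1))/2 + (3/2)*(κ2 t - κ2 (t+1))) :
    ∀ t : ℕ,
      min (κ2 t - κ3 t / 3) (κ2 (t+1) - κ3 (t+1) / 3) + 1
        ≤ min (κ2 (8*t+1) - κ3 (8*t+1) / 3) (κ2 (8*t+2) - κ3 (8*t+2) / 3) :=
  stmt_16_general κ2 h2e h2o κ3 h3e h3o
end

section
/- For all t ≥ 0 and k ≥ 0, setting t^{(k)} = 2^k·t + 2^k − 1, one has κ₂(t^{(k)}) − κ₂(t+1) = (κ₂(t)−κ₂(t+1))/2^k + (2^k−1)/2^{k−1}. -/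
/-!
Write `t⁽ᵏ⁾ = 2ᵏ t + 2ᵏ - 1`. Then `t⁽ᵏ⁺¹⁾ = 2 t⁽ᵏ⁾ + 1` and `t⁽ᵏ⁾ + 1 = 2ᵏ (t + 1)`, so the odd
recursion together with `κ₂(2ᵏ n) = κ₂(n)` shows that `aₖ = κ₂(t⁽ᵏ⁾) - κ₂(t + 1)` satisfies
`aₖ₊₁ = aₖ / 2 + 1`. This affine recursion has fixed point `2`, hence `aₖ - 2 = (a₀ - 2) / 2ᵏ`.
-/

theorem apply_two_pow_mul {β : Type*} {f : ℕ → β} (h : ∀ n, f (2 * n) = f n) (k n : ℕ) :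
    f (2 ^ k * n) = f n := by
  induction k with
  | zero => simp
  | succ k ih => rw [pow_succ', mul_assoc, h, ih]

theorem sub_two_eq_div_two_pow_of_eq_div_two_add_one {K : Type*} [Field K] [NeZero (2 : K)]
    {a : ℕ → K} (h : ∀ k, a (k + 1) = a k / 2 + 1) (k : ℕ) :
    a k - 2 = (a 0 - 2) / 2 ^ k := by
  induction k with
  | zero => simp
  | succ k ih =>
    rw [h, pow_succ, ← div_div, ← ih]
    field_simp
    ring

theorem two_pow_sub_one_div_two_pow_pred {K : Type*} [Field K] [NeZero (2 : K)] (k : ℕ) :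
    ((2 : K) ^ k - 1) / 2 ^ (k - 1) = 2 - 2 / 2 ^ k := by
  cases k with
  | zero => norm_num
  | succ k =>
    rw [Nat.add_sub_cancel, pow_succ]
    field_simp

theorem two_pow_succ_mul_add_two_pow_succ_sub_one (k t : ℕ) :
    2 ^ (k + 1) * t + 2 ^ (k + 1) - 1 = 2 * (2 ^ k * t + 2 ^ k - 1) + 1 := by
  have : 1 ≤ 2 ^ k := Nat.one_le_two_pow
  have : 2 ^ (k + 1) * t + 2 ^ (k + 1) = 2 * (2 ^ k * t + 2 ^ k) := by ring
  omega

theorem two_pow_mul_add_two_pow_sub_one_add_one (k t : ℕ) :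
    2 ^ k * t + 2 ^ k - 1 + 1 = 2 ^ k * (t + 1) := by
  have : 1 ≤ 2 ^ k := Nat.one_le_two_pow
  rw [Nat.sub_add_cancel (by omega), mul_add_one]

theorem apply_two_pow_succ_mul_add_two_pow_succ_sub_one {K : Type*} [Field K] [NeZero (2 : K)]
    {κ : ℕ → K}
    (he : ∀ t, κ (2 * t) = κ t) (ho : ∀ t, κ (2 * t + 1) = (κ t + κ (t + 1)) / 2 + 1)
    (t k : ℕ) :
    κ (2 ^ (k + 1) * t + 2 ^ (k + 1) - 1) - κ (t + 1)
      = (κ (2 ^ k * t + 2 ^ k - 1) - κ (t + 1)) / 2 + 1 := by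
  rw [two_pow_succ_mul_add_two_pow_succ_sub_one, ho, two_pow_mul_add_two_pow_sub_one_add_one,
    apply_two_pow_mul he]
  field_simp
  ring

theorem stmt_17_general (κ2 : ℕ → ℚ)
    (h2e : ∀ t, κ2 (2*t) = κ2 t)
    (h2o : ∀ t, κ2 (2*t+1) = (κ2 t + κ2 (t+1))/2 + 1) :
    ∀ t k : ℕ,
      κ2 (2^k*t + 2^k - 1) - κ2 (t+1)
        = (κ2 t - κ2 (t+1))/2^k + ((2:ℚ)^k-1)/2^(k-1) := by
  intro t k
  have h := sub_two_eq_div_two_pow_of_eq_div_two_add_one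
    (a := fun k ↦ κ2 (2 ^ k * t + 2 ^ k - 1) - κ2 (t + 1))
    (apply_two_pow_succ_mul_add_two_pow_succ_sub_one h2e h2o t) k
  simp only [pow_zero, one_mul, Nat.add_sub_cancel] at h
  rw [two_pow_sub_one_div_two_pow_pred]
  linear_combination h

theorem stmt_17 (κ2 : ℕ → ℚ) (h2z : κ2 0 = 0)
    (h2e : ∀ t, κ2 (2*t) = κ2 t)
    (h2o : ∀ t, κ2 (2*t+1) = (κ2 t + κ2 (t+1))/2 + 1) :
    ∀ t k : ℕ,
      κ2 (2^k*t + 2^k - 1) - κ2 (t+1)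
        = (κ2 t - κ2 (t+1))/2^k + ((2:ℚ)^k-1)/2^(k-1) :=
  stmt_17_general κ2 h2e h2o
end
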